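/- Fix disjoint finite sets S, P and a subspace T of ℂ^{S⊎P}. If V ⊆ ℂ^S × ℂ^S is a passive ℂ-linear subspace, then its port behaviour B(V) relative to T is a passive subspace of ℂ^P × ℂ^P. -/
import Mathlib

/-!
STATEMENT 17: Fix disjoint finite sets S, P and a subspace T of ℂ^{S⊎P}. If
V ⊆ ℂ^S × ℂ^S is a passive ℂ-linear subspace (2·Re⟨x,y⟩ ≥ 0 for all (x,y) ∈ V), then
its port behaviour B(V) relative to T is a passive subspace of ℂ^P × ℂ^P.
-/

/-- Hermitian inner product on `ℂ^X`: `⟨f,g⟩ = Σ_e f e * conj (g e)`. -/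
noncomputable def hinner {X : Type*} [Fintype X] (f g : X → ℂ) : ℂ :=
  ∑ e, f e * (starRingEnd ℂ) (g e)

/-- Orthogonal complement (as a set) in `ℂ^X × ℂ^Y` with inner product
`⟨(f₁,f₂),(g₁,g₂)⟩ = ⟨f₁,g₁⟩ + ⟨f₂,g₂⟩`. -/
def pperp {X Y : Type*} [Fintype X] [Fintype Y] (K : Set ((X → ℂ) × (Y → ℂ))) :
    Set ((X → ℂ) × (Y → ℂ)) :=
  {g | ∀ f ∈ K, hinner f.1 g.1 + hinner f.2 g.2 = 0}

/-- The port behaviour of a device characteristic `K ⊆ ℂ^S × ℂ^S` relative to the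
KVL space `T ⊆ ℂ^{S⊎P}` (with KCL space `T^⊥`). -/
def portB {S P : Type*} [Fintype S] [Fintype P]
    (T : Submodule ℂ ((S → ℂ) × (P → ℂ))) (K : Set ((S → ℂ) × (S → ℂ))) :
    Set ((P → ℂ) × (P → ℂ)) :=
  {w | ∃ (vS iS : S → ℂ) (vP iP : P → ℂ),
      (vS, iS) ∈ K ∧ (vS, vP) ∈ T ∧
      (iS, iP) ∈ pperp (T : Set ((S → ℂ) × (P → ℂ))) ∧ w = (vP, -iP)}

lemma hinner_neg_right {X : Type*} [Fintype X] (f g : X → ℂ) :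
    hinner f (-g) = -hinner f g := by
  simp [hinner, Finset.sum_neg_distrib]

theorem statement17 (S P : Type*) [Fintype S] [Fintype P]
    (T : Submodule ℂ ((S → ℂ) × (P → ℂ)))
    (V : Submodule ℂ ((S → ℂ) × (S → ℂ)))
    (hpassive : ∀ p ∈ (V : Set ((S → ℂ) × (S → ℂ))),
      0 ≤ 2 * (hinner p.1 p.2).re) :
    ∀ w ∈ portB T (V : Set ((S → ℂ) × (S → ℂ))),
      0 ≤ 2 * (hinner w.1 w.2).re := by
  rintro w ⟨vS, iS, vP, iP, hV, hT, hperp, rfl⟩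
  have horth := hperp (vS, vP) hT
  have h1 : hinner vP (-iP) = hinner vS iS := by
    rw [hinner_neg_right]
    linear_combination -horth
  simpa [h1] using hpassive (vS, iS) hV
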